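/- arXiv:1806.03313 — 2 statements merged into one kernel-verified Lean document; each statement's English description precedes it below -/
import Mathlib

section
/- Let s ≤ d be natural numbers and let x : ℕ → ℝ be nonnegative with x_j = 0 for j > d. Then ∑_{k=s}^{d} ∑_{j=k}^{d} x_j · C(j,s) · C(j-s, k-s) · C(d,s) · C(d-s, k-s) ≤ C(d,s)² · C(2(d-s), d-s) · ∑_{j=s}^{d} x_j. -/
/-!
Each term satisfies `C(j,s) C(j-s,k-s) ≤ C(d,s) C(d-s,k-s)` since binomial coefficients grow with
the upper index, so the `k`-th inner sum is at most `C(d,s)² C(d-s,k-s)² ∑ⱼ xⱼ`; summing over `k`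
and applying Vandermonde's `∑ᵢ C(n,i)² = C(2n,n)` with `n = d - s` gives the bound.
-/

open Finset

namespace Nat

theorem choose_mul_choose_sub_le_of_le {j d : ℕ} (h : j ≤ d) (s m : ℕ) :
    j.choose s * (j - s).choose m ≤ d.choose s * (d - s).choose m :=
  Nat.mul_le_mul (choose_le_choose s h) (choose_le_choose m (Nat.sub_le_sub_right h s))

theorem sum_Icc_choose_sub_sq {s d : ℕ} (h : s ≤ d) :
    ∑ k ∈ Icc s d, (d - s).choose (k - s) ^ 2 = (2 * (d - s)).choose (d - s) := by
  rw [← Ico_add_one_right_eq_Icc, sum_Ico_eq_sum_range, ← sum_range_choose_sq,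
    Nat.sub_add_comm h]
  simp only [Nat.add_sub_cancel_left]

end Nat

theorem sum_Icc_mul_choose_le {x : ℕ → ℝ} (hx : ∀ j, 0 ≤ x j) {s k d : ℕ} (hsk : s ≤ k) :
    ∑ j ∈ Icc k d, x j * (j.choose s : ℝ) * ((j - s).choose (k - s) : ℝ)
        * (d.choose s : ℝ) * ((d - s).choose (k - s) : ℝ)
      ≤ ((d.choose s : ℝ) * (d - s).choose (k - s)) ^ 2 * ∑ j ∈ Icc s d, x j := by
  set c : ℝ := d.choose s * (d - s).choose (k - s) with hc
  calc _ ≤ ∑ j ∈ Icc k d, x j * c * c := by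
        refine sum_le_sum fun j hj => ?_
        have hchoose : (j.choose s * (j - s).choose (k - s) : ℝ) ≤ c := by
          rw [hc]
          exact_mod_cast Nat.choose_mul_choose_sub_le_of_le (mem_Icc.1 hj).2 s (k - s)
        calc _ = x j * (j.choose s * (j - s).choose (k - s) : ℝ) * c := by ring
          _ ≤ x j * c * c := by gcongr; exact hx j
    _ ≤ ∑ j ∈ Icc s d, x j * c * c :=
        sum_le_sum_of_subset_of_nonneg (Icc_subset_Icc_left hsk)
          fun j _ _ => mul_nonneg (mul_nonneg (hx j) (by positivity)) (by positivity)
    _ = c ^ 2 * ∑ j ∈ Icc s d, x j := by rw [mul_sum]; exact sum_congr rfl fun _ _ => by ring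

theorem stmt8_general (s d : ℕ) (hsd : s ≤ d) (x : ℕ → ℝ) (hx : ∀ j, 0 ≤ x j) :
    ∑ k ∈ Finset.Icc s d, ∑ j ∈ Finset.Icc k d,
        x j * (j.choose s : ℝ) * ((j - s).choose (k - s) : ℝ)
          * (d.choose s : ℝ) * ((d - s).choose (k - s) : ℝ)
      ≤ (d.choose s : ℝ) ^ 2 * ((2 * (d - s)).choose (d - s) : ℝ)
          * ∑ j ∈ Finset.Icc s d, x j := by
  calc _ ≤ ∑ k ∈ Icc s d,
        ((d.choose s : ℝ) * (d - s).choose (k - s)) ^ 2 * ∑ j ∈ Icc s d, x j :=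
        sum_le_sum fun k hk => sum_Icc_mul_choose_le hx (mem_Icc.1 hk).1
    _ = (d.choose s : ℝ) ^ 2 * (∑ k ∈ Icc s d, (d - s).choose (k - s) ^ 2 : ℕ)
          * ∑ j ∈ Icc s d, x j := by
        simp only [← sum_mul, mul_pow, ← mul_sum]
        push_cast
        rfl
    _ = _ := by rw [Nat.sum_Icc_choose_sub_sq hsd]

theorem stmt8 (s d : ℕ) (hsd : s ≤ d) (x : ℕ → ℝ) (hx : ∀ j, 0 ≤ x j)
    (hx0 : ∀ j, d < j → x j = 0) :
    ∑ k ∈ Finset.Icc s d, ∑ j ∈ Finset.Icc k d,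
        x j * (j.choose s : ℝ) * ((j - s).choose (k - s) : ℝ)
          * (d.choose s : ℝ) * ((d - s).choose (k - s) : ℝ)
      ≤ (d.choose s : ℝ) ^ 2 * ((2 * (d - s)).choose (d - s) : ℝ)
          * ∑ j ∈ Finset.Icc s d, x j :=
  stmt8_general s d hsd x hx
end

section
/- Let s ≤ d and let x_j ≥ 0 for s ≤ j ≤ d be reals, n ≥ 0, 0 < r ≤ 1, and define for each k with s ≤ k ≤ d the quantity E_k = r²·∑_{j=k}^{d} C(j,k)·x_j + n·r·C(d,k). Then ∑_{k=s}^{d} C(k,s)²·E_k² ≤ C(d,s)²·C(2(d-s), d-s)·(r²·g + n·r)², where g = ∑_{j=s}^{d} x_j. -/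
open Finset

/-
Multiplying `E_k` by `C(k, s)` and using `C(j, k) ≤ C(d, k)` bounds each term by
`C(k, s) C(d, k) (a g + b) = C(d, s) C(d - s, k - s) (a g + b)`, where `a = r²`, `b = n r`.
Squaring and summing over `k`, Vandermonde's identity `∑ᵢ C(m, i)² = C(2m, m)` with `m = d - s`
gives the bound.
-/

lemma Nat.sum_Icc_choose_sub_sq_s15 {s d : ℕ} (hsd : s ≤ d) :
    ∑ k ∈ Icc s d, ((d - s).choose (k - s)) ^ 2 = (2 * (d - s)).choose (d - s) := by
  rw [← Nat.sum_range_choose_sq, ← Ico_add_one_right_eq_Icc, sum_Ico_eq_sum_range,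
    show d + 1 - s = d - s + 1 by omega]
  simp only [Nat.add_sub_cancel_left]

lemma sum_Icc_choose_mul_le {x : ℕ → ℝ} (hx : ∀ j, 0 ≤ x j) {s k d : ℕ} (hsk : s ≤ k) :
    ∑ j ∈ Icc k d, (j.choose k : ℝ) * x j ≤ d.choose k * ∑ j ∈ Icc s d, x j :=
  calc ∑ j ∈ Icc k d, (j.choose k : ℝ) * x j
      ≤ ∑ j ∈ Icc k d, (d.choose k : ℝ) * x j := by
        gcongr with j hj
        · exact hx j
        · exact (mem_Icc.mp hj).2
    _ = d.choose k * ∑ j ∈ Icc k d, x j := (mul_sum ..).symm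
    _ ≤ d.choose k * ∑ j ∈ Icc s d, x j := by
        gcongr
        exact fun j _ _ => hx j

lemma choose_mul_le_choose_mul_choose_sub {x : ℕ → ℝ} (hx : ∀ j, 0 ≤ x j) {a b : ℝ}
    (ha : 0 ≤ a) {s k d : ℕ} (hsk : s ≤ k) :
    (k.choose s : ℝ) * (a * ∑ j ∈ Icc k d, (j.choose k : ℝ) * x j + b * d.choose k)
      ≤ d.choose s * (d - s).choose (k - s) * (a * ∑ j ∈ Icc s d, x j + b) := by
  have hchoose : (d.choose k : ℝ) * k.choose s = d.choose s * (d - s).choose (k - s) := by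
    exact_mod_cast Nat.choose_mul hsk
  calc (k.choose s : ℝ) * (a * ∑ j ∈ Icc k d, (j.choose k : ℝ) * x j + b * d.choose k)
      ≤ k.choose s * (a * (d.choose k * ∑ j ∈ Icc s d, x j) + b * d.choose k) := by
        gcongr
        exact sum_Icc_choose_mul_le hx hsk
    _ = d.choose k * k.choose s * (a * ∑ j ∈ Icc s d, x j + b) := by ring
    _ = d.choose s * (d - s).choose (k - s) * (a * ∑ j ∈ Icc s d, x j + b) := by rw [hchoose]

lemma sum_choose_sq_mul_sq_le {d s : ℕ} (hsd : s ≤ d) {x : ℕ → ℝ} (hx : ∀ j, 0 ≤ x j)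
    {a b : ℝ} (ha : 0 ≤ a) (hb : 0 ≤ b) :
    ∑ k ∈ Icc s d, (k.choose s : ℝ) ^ 2 *
        (a * ∑ j ∈ Icc k d, (j.choose k : ℝ) * x j + b * d.choose k) ^ 2
      ≤ (d.choose s : ℝ) ^ 2 * (2 * (d - s)).choose (d - s) * (a * ∑ j ∈ Icc s d, x j + b) ^ 2 :=
  calc ∑ k ∈ Icc s d, (k.choose s : ℝ) ^ 2 *
        (a * ∑ j ∈ Icc k d, (j.choose k : ℝ) * x j + b * d.choose k) ^ 2
      ≤ ∑ k ∈ Icc s d,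
          (d.choose s * (d - s).choose (k - s) * (a * ∑ j ∈ Icc s d, x j + b) : ℝ) ^ 2 := by
        gcongr with k hk
        have hE : 0 ≤ a * ∑ j ∈ Icc k d, (j.choose k : ℝ) * x j + b * d.choose k := by
          have := sum_nonneg fun j (_ : j ∈ Icc k d) => mul_nonneg (j.choose k).cast_nonneg (hx j)
          positivity
        rw [← mul_pow]
        exact pow_le_pow_left₀ (by positivity)
          (choose_mul_le_choose_mul_choose_sub hx ha (mem_Icc.mp hk).1) 2
    _ = (d.choose s : ℝ) ^ 2 * (2 * (d - s)).choose (d - s) *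
          (a * ∑ j ∈ Icc s d, x j + b) ^ 2 := by
        simp only [mul_pow, ← sum_mul, ← mul_sum]
        rw [← Nat.sum_Icc_choose_sub_sq_s15 hsd]
        push_cast
        ring

theorem stmt15_general (d s : ℕ) (hsd : s ≤ d) (x : ℕ → ℝ) (hx : ∀ j, 0 ≤ x j)
    (n r : ℝ) (hn : 0 ≤ n) (hr0 : 0 < r) :
    ∑ k ∈ Finset.Icc s d, (k.choose s : ℝ) ^ 2 *
        (r ^ 2 * ∑ j ∈ Finset.Icc k d, (j.choose k : ℝ) * x j + n * r * (d.choose k : ℝ)) ^ 2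
      ≤ (d.choose s : ℝ) ^ 2 * ((2 * (d - s)).choose (d - s) : ℝ)
          * (r ^ 2 * (∑ j ∈ Finset.Icc s d, x j) + n * r) ^ 2 :=
  sum_choose_sq_mul_sq_le hsd hx (sq_nonneg r) (mul_nonneg hn hr0.le)

theorem stmt15 (d s : ℕ) (hsd : s ≤ d) (x : ℕ → ℝ) (hx : ∀ j, 0 ≤ x j)
    (n r : ℝ) (hn : 0 ≤ n) (hr0 : 0 < r) (hr1 : r ≤ 1) :
    ∑ k ∈ Finset.Icc s d, (k.choose s : ℝ) ^ 2 *
        (r ^ 2 * ∑ j ∈ Finset.Icc k d, (j.choose k : ℝ) * x j + n * r * (d.choose k : ℝ)) ^ 2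
      ≤ (d.choose s : ℝ) ^ 2 * ((2 * (d - s)).choose (d - s) : ℝ)
          * (r ^ 2 * (∑ j ∈ Finset.Icc s d, x j) + n * r) ^ 2 :=
  stmt15_general d s hsd x hx n r hn hr0
end
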